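/- arXiv:2510.25591 — 3 statements merged into one kernel-verified Lean document; each statement's English description precedes it below -/
import Mathlib

section
/- Let λ be a measure on a measurable space X with 0 < λ(X) < ∞, let S ⊆ X × X be measurable, let g : X → ℝ be measurable and λ-integrable, and set f x := ∫_{S_x} g dλ. Let Φ : ℝ → ℝ be continuous, nondecreasing on [0,∞), convex on [0,∞), with Φ(0) = 0. Define the weight ŵ : X → ℝ by ŵ(y) := 1 + (λ(Sʸ)).toReal / (λ X).toReal. Then, in the extended nonnegative reals, (1/2) · ‖g‖_{Φ,ŵ} ≤ ‖f‖_Φ + ‖g‖_Φ ≤ (1 + λ X) · ‖g‖_{Φ,ŵ}. -/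
open MeasureTheory ENNReal

/-- Weighted Luxemburg functional: the infimum in `ℝ≥0∞` of `ENNReal.ofReal t` over all
real `t > 0` such that `∫⁻ x, ENNReal.ofReal (w x * Φ (|f x| / t)) ∂lam ≤ 1`
(the infimum of the empty family is `∞`). -/
noncomputable def luxW {X : Type*} [MeasurableSpace X] (lam : Measure X)
    (Φ : ℝ → ℝ) (w : X → ℝ) (f : X → ℝ) : ℝ≥0∞ :=
  sInf {r : ℝ≥0∞ | ∃ t : ℝ, 0 < t ∧
    (∫⁻ x, ENNReal.ofReal (w x * Φ (|f x| / t)) ∂lam) ≤ 1 ∧ r = ENNReal.ofReal t}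

/-!
Comparing `‖g‖_Φ` with `‖g‖_{Φ,ŵ}` in either direction is a pointwise comparison of modulars:
`1 ≤ ŵ ≤ 2`, and convexity with `Φ 0 = 0` gives `Φ (a / 2) ≤ Φ a / 2`. For the estimate of `f`,
Jensen's inequality for the normalized measure on `X` bounds `Φ (|f x| / (λ(X) t))` by
`λ(X)⁻¹ ∫_{S_x} Φ (|g| / t)`; integrating in `x` and exchanging the order of integration turns the
section integrals into the weight `λ(Sʸ) ≤ λ(X) ŵ(y)`, so every admissible `t` for `‖g‖_{Φ,ŵ}`
makes `λ(X) t` admissible for `‖f‖_Φ`.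
-/

open Set

section Luxemburg

variable {X : Type*} [MeasurableSpace X] {μ : Measure X} {Φ : ℝ → ℝ}

noncomputable def luxModular (μ : Measure X) (Φ : ℝ → ℝ) (w f : X → ℝ) (t : ℝ) : ℝ≥0∞ :=
  ∫⁻ x, ENNReal.ofReal (w x * Φ (|f x| / t)) ∂μ

lemma luxW_le_ofReal {w f : X → ℝ} {t : ℝ} (ht : 0 < t) (h : luxModular μ Φ w f t ≤ 1) :
    luxW μ Φ w f ≤ ENNReal.ofReal t :=
  sInf_le ⟨t, ht, h, rfl⟩

lemma le_luxW {w f : X → ℝ} {r : ℝ≥0∞}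
    (h : ∀ t, 0 < t → luxModular μ Φ w f t ≤ 1 → r ≤ ENNReal.ofReal t) :
    r ≤ luxW μ Φ w f :=
  le_sInf <| by rintro _ ⟨t, ht, hmod, rfl⟩; exact h t ht hmod

lemma luxW_le_ofReal_mul_luxW {w f w' f' : X → ℝ} {c : ℝ} (hc : 0 < c)
    (h : ∀ t, 0 < t → luxModular μ Φ w f t ≤ 1 → luxModular μ Φ w' f' (c * t) ≤ 1) :
    luxW μ Φ w' f' ≤ ENNReal.ofReal c * luxW μ Φ w f := by
  rw [mul_comm, ← ENNReal.div_le_iff_le_mul (.inl (ENNReal.ofReal_pos.2 hc).ne')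
    (.inl ENNReal.ofReal_ne_top)]
  refine le_luxW fun t ht hmod => ?_
  rw [ENNReal.div_le_iff_le_mul (.inl (ENNReal.ofReal_pos.2 hc).ne') (.inl ENNReal.ofReal_ne_top),
    ← ENNReal.ofReal_mul ht.le, mul_comm t]
  exact luxW_le_ofReal (mul_pos hc ht) (h t ht hmod)

lemma ConvexOn.map_div_le_div {K a : ℝ} (hΦconv : ConvexOn ℝ (Ici 0) Φ) (hΦ0 : Φ 0 = 0)
    (hK : 1 ≤ K) (ha : 0 ≤ a) : Φ (a / K) ≤ Φ a / K := by
  have hK0 : 0 < K := zero_lt_one.trans_le hK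
  have := hΦconv.2 (mem_Ici.2 ha) self_mem_Ici (inv_nonneg.2 hK0.le)
    (sub_nonneg.2 (inv_le_one_of_one_le₀ hK)) (add_sub_cancel _ _)
  simpa [hΦ0, div_eq_inv_mul] using this

lemma luxW_le_ofReal_mul_of_le_mul {w w' f : X → ℝ} {K : ℝ} (hK : 1 ≤ K)
    (hΦconv : ConvexOn ℝ (Ici 0) Φ) (hΦ0 : Φ 0 = 0) (hΦnn : ∀ a, 0 ≤ a → 0 ≤ Φ a)
    (hw' : ∀ x, 0 ≤ w' x) (hw : ∀ x, w x ≤ K * w' x) :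
    luxW μ Φ w f ≤ ENNReal.ofReal K * luxW μ Φ w' f := by
  have hK0 : 0 < K := zero_lt_one.trans_le hK
  refine luxW_le_ofReal_mul_luxW hK0 fun t ht hmod => le_trans (lintegral_mono fun x => ?_) hmod
  refine ENNReal.ofReal_le_ofReal ?_
  have ha : 0 ≤ |f x| / t := by positivity
  calc w x * Φ (|f x| / (K * t))
      ≤ K * w' x * (Φ (|f x| / t) / K) := by
        rw [mul_comm K t, ← div_div]
        exact mul_le_mul (hw x) (hΦconv.map_div_le_div hΦ0 hK ha)
          (hΦnn _ (by positivity)) (mul_nonneg hK0.le (hw' x))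
    _ = w' x * Φ (|f x| / t) := by field_simp

lemma ConvexOn.map_setIntegral_div_le [IsFiniteMeasure μ] [NeZero μ]
    (hΦconv : ConvexOn ℝ (Ici 0) Φ) (hΦc : ContinuousOn Φ (Ici 0)) (hΦ0 : Φ 0 = 0)
    {s : Set X} (hs : MeasurableSet s) {h : X → ℝ} (hh0 : ∀ x, 0 ≤ h x)
    (hh : IntegrableOn h s μ) (hΦh : IntegrableOn (fun x => Φ (h x)) s μ) :
    Φ ((∫ x in s, h x ∂μ) / μ.real univ) ≤ (∫ x in s, Φ (h x) ∂μ) / μ.real univ := by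
  have hcomp : Φ ∘ s.indicator h = s.indicator (fun x => Φ (h x)) :=
    (indicator_comp_of_zero hΦ0).symm
  have := hΦconv.map_average_le hΦc isClosed_Ici
    (ae_of_all _ fun x => indicator_nonneg (fun x _ => hh0 x) x)
    (hh.integrable_indicator hs) (hcomp ▸ hΦh.integrable_indicator hs)
  rw [average_eq, average_eq, ← Function.comp_def Φ, hcomp] at this
  simpa only [integral_indicator hs, smul_eq_mul, inv_mul_eq_div] using this

lemma map_abs_setIntegral_div_le [IsFiniteMeasure μ] [NeZero μ]
    (hΦmono : MonotoneOn Φ (Ici 0)) (hΦconv : ConvexOn ℝ (Ici 0) Φ)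
    (hΦc : ContinuousOn Φ (Ici 0)) (hΦ0 : Φ 0 = 0) {s : Set X} (hs : MeasurableSet s)
    {g : X → ℝ} (hg : Integrable g μ) {t : ℝ} (ht : 0 < t)
    (hG : Integrable (fun y => Φ (|g y| / t)) μ) :
    Φ (|∫ y in s, g y ∂μ| / (t * μ.real univ)) ≤ (∫ y in s, Φ (|g y| / t) ∂μ) / μ.real univ := by
  have habs : |∫ y in s, g y ∂μ| / (t * μ.real univ) ≤
      (∫ y in s, |g y| / t ∂μ) / μ.real univ := by
    rw [integral_div, div_div]
    gcongr
    exact abs_integral_le_integral_abs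
  refine (hΦmono (mem_Ici.2 (by positivity)) ?_ habs).trans <|
    hΦconv.map_setIntegral_div_le hΦc hΦ0 hs (fun y => by positivity)
      (hg.abs.div_const t).integrableOn hG.integrableOn
  exact div_nonneg (integral_nonneg fun y => by positivity) measureReal_nonneg

lemma lintegral_setLIntegral_sections {Y : Type*} [MeasurableSpace Y] {ν : Measure Y}
    [SFinite μ] [SFinite ν] {S : Set (X × Y)} (hS : MeasurableSet S) {F : Y → ℝ≥0∞}
    (hF : AEMeasurable F ν) :
    ∫⁻ x, ∫⁻ y in {y | (x, y) ∈ S}, F y ∂ν ∂μ = ∫⁻ y, μ {x | (x, y) ∈ S} * F y ∂ν := by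
  calc ∫⁻ x, ∫⁻ y in {y | (x, y) ∈ S}, F y ∂ν ∂μ
      = ∫⁻ x, ∫⁻ y, S.indicator (fun p => F p.2) (x, y) ∂ν ∂μ := by
        congr! 2 with x
        exact (lintegral_indicator (measurable_prodMk_left hS) _).symm
    _ = ∫⁻ y, ∫⁻ x, S.indicator (fun p => F p.2) (x, y) ∂μ ∂ν :=
        lintegral_lintegral_swap (hF.comp_snd.indicator hS)
    _ = ∫⁻ y, μ {x | (x, y) ∈ S} * F y ∂ν := by
        congr! 2 with y
        rw [mul_comm]
        exact lintegral_indicator_const (measurable_prodMk_right hS) (F y)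

lemma MonotoneOn.map_nonneg_of_map_zero (hΦmono : MonotoneOn Φ (Ici 0)) (hΦ0 : Φ 0 = 0)
    {a : ℝ} (ha : 0 ≤ a) : 0 ≤ Φ a :=
  hΦ0 ▸ hΦmono self_mem_Ici ha ha

lemma luxModular_sectionIntegral_le [IsFiniteMeasure μ] [NeZero μ]
    (hΦmono : MonotoneOn Φ (Ici 0)) (hΦconv : ConvexOn ℝ (Ici 0) Φ)
    (hΦc : ContinuousOn Φ (Ici 0)) (hΦ0 : Φ 0 = 0) {S : Set (X × X)} (hS : MeasurableSet S)
    {g w : X → ℝ} (hg : Integrable g μ)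
    (hwS : ∀ y, μ.real {x | (x, y) ∈ S} ≤ μ.real univ * w y)
    {t : ℝ} (ht : 0 < t) (hG : Integrable (fun y => Φ (|g y| / t)) μ) :
    luxModular μ Φ (fun _ => 1) (fun x => ∫ y in {y | (x, y) ∈ S}, g y ∂μ)
      (μ.real univ * t) ≤ luxModular μ Φ w g t := by
  set c := μ.real univ
  have hc : 0 < c := measureReal_univ_pos
  have hGnn : ∀ y, 0 ≤ Φ (|g y| / t) := fun y =>
    hΦmono.map_nonneg_of_map_zero hΦ0 (by positivity)
  calc luxModular μ Φ (fun _ => 1) (fun x => ∫ y in {y | (x, y) ∈ S}, g y ∂μ) (c * t)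
      ≤ ∫⁻ x, ENNReal.ofReal c⁻¹ *
          ∫⁻ y in {y | (x, y) ∈ S}, ENNReal.ofReal (Φ (|g y| / t)) ∂μ ∂μ := by
        refine lintegral_mono fun x => ?_
        rw [one_mul, mul_comm c t, ← ofReal_integral_eq_lintegral_ofReal hG.integrableOn
          (ae_of_all _ hGnn), ← ENNReal.ofReal_mul (inv_nonneg.2 hc.le), inv_mul_eq_div]
        exact ENNReal.ofReal_le_ofReal <| map_abs_setIntegral_div_le hΦmono hΦconv hΦc hΦ0
          (measurable_prodMk_left hS) hg ht hG
    _ = ENNReal.ofReal c⁻¹ *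
          ∫⁻ y, μ {x | (x, y) ∈ S} * ENNReal.ofReal (Φ (|g y| / t)) ∂μ := by
        rw [lintegral_const_mul' _ _ ENNReal.ofReal_ne_top,
          lintegral_setLIntegral_sections hS hG.aemeasurable.ennreal_ofReal]
    _ ≤ ENNReal.ofReal c⁻¹ *
          ∫⁻ y, ENNReal.ofReal c * ENNReal.ofReal (w y * Φ (|g y| / t)) ∂μ := by
        gcongr _ * ?_
        refine lintegral_mono fun y => ?_
        rw [← ofReal_measureReal, ← ENNReal.ofReal_mul measureReal_nonneg,
          ← ENNReal.ofReal_mul hc.le, ← mul_assoc]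
        exact ENNReal.ofReal_le_ofReal (mul_le_mul_of_nonneg_right (hwS y) (hGnn y))
    _ = luxModular μ Φ w g t := by
        rw [lintegral_const_mul' _ _ ENNReal.ofReal_ne_top, ← mul_assoc,
          ← ENNReal.ofReal_mul (inv_nonneg.2 hc.le), inv_mul_cancel₀ hc.ne', ENNReal.ofReal_one,
          one_mul, luxModular]

lemma luxW_sectionIntegral_le [IsFiniteMeasure μ] [NeZero μ]
    (hΦmono : MonotoneOn Φ (Ici 0)) (hΦconv : ConvexOn ℝ (Ici 0) Φ) (hΦc : Continuous Φ)
    (hΦ0 : Φ 0 = 0) {S : Set (X × X)} (hS : MeasurableSet S) {g w : X → ℝ}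
    (hg : Integrable g μ) (hw1 : ∀ y, 1 ≤ w y)
    (hwS : ∀ y, μ.real {x | (x, y) ∈ S} ≤ μ.real univ * w y) :
    luxW μ Φ (fun _ => 1) (fun x => ∫ y in {y | (x, y) ∈ S}, g y ∂μ) ≤
      μ univ * luxW μ Φ w g := by
  rw [← ofReal_measureReal]
  refine luxW_le_ofReal_mul_luxW measureReal_univ_pos fun t ht hmod =>
    (luxModular_sectionIntegral_le hΦmono hΦconv hΦc.continuousOn hΦ0 hS hg hwS ht ?_).trans hmod
  have hGnn : ∀ y, 0 ≤ Φ (|g y| / t) := fun y =>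
    hΦmono.map_nonneg_of_map_zero hΦ0 (by positivity)
  refine ⟨hΦc.comp_aestronglyMeasurable (hg.abs.div_const t).aestronglyMeasurable,
    (hasFiniteIntegral_iff_ofReal (ae_of_all _ hGnn)).2 ?_⟩
  refine lt_of_le_of_lt (lintegral_mono fun y => ?_) (hmod.trans_lt one_lt_top)
  exact ENNReal.ofReal_le_ofReal (le_mul_of_one_le_left (hGnn y) (hw1 y))

end Luxemburg

theorem stmt_0_general {X : Type*} [MeasurableSpace X] (lam : Measure X)
    (hpos : 0 < lam Set.univ) (hfin : lam Set.univ < ⊤)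
    (S : Set (X × X)) (hS : MeasurableSet S)
    (g : X → ℝ) (hgint : Integrable g lam)
    (f : X → ℝ) (hf : ∀ x, f x = ∫ y in {y | (x, y) ∈ S}, g y ∂lam)
    (Φ : ℝ → ℝ) (hΦc : Continuous Φ) (hΦmono : MonotoneOn Φ (Set.Ici 0))
    (hΦconv : ConvexOn ℝ (Set.Ici 0) Φ) (hΦ0 : Φ 0 = 0)
    (w : X → ℝ)
    (hw : ∀ y, w y = 1 + (lam {x | (x, y) ∈ S}).toReal / (lam Set.univ).toReal) :
    (1 / 2) * luxW lam Φ w g ≤ luxW lam Φ (fun _ => 1) f + luxW lam Φ (fun _ => 1) g ∧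
      luxW lam Φ (fun _ => 1) f + luxW lam Φ (fun _ => 1) g ≤
        (1 + lam Set.univ) * luxW lam Φ w g := by
  have : IsFiniteMeasure lam := ⟨hfin⟩
  have : NeZero lam := ⟨fun h => by simp [h] at hpos⟩
  obtain rfl : f = fun x => ∫ y in {y | (x, y) ∈ S}, g y ∂lam := funext hf
  simp only [← measureReal_def] at hw
  have hΦnn := fun a (ha : 0 ≤ a) => hΦmono.map_nonneg_of_map_zero hΦ0 ha
  have hratio : ∀ y, 0 ≤ lam.real {x | (x, y) ∈ S} / lam.real univ ∧
      lam.real {x | (x, y) ∈ S} / lam.real univ ≤ 1 := fun y =>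
    ⟨by positivity, div_le_one_of_le₀ (measureReal_mono (subset_univ _)) measureReal_nonneg⟩
  have hw1 : ∀ y, 1 ≤ w y := fun y => by linarith [hw y, (hratio y).1]
  have hwS : ∀ y, lam.real {x | (x, y) ∈ S} ≤ lam.real univ * w y := fun y => by
    rw [hw y, mul_add, mul_one, mul_div_cancel₀ _ measureReal_univ_ne_zero]
    linarith [measureReal_nonneg (μ := lam) (s := univ)]
  have hg_le : luxW lam Φ (fun _ => 1) g ≤ luxW lam Φ w g := by
    simpa using luxW_le_ofReal_mul_of_le_mul le_rfl hΦconv hΦ0 hΦnn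
      (fun y => zero_le_one.trans (hw1 y)) (fun y => by simpa using hw1 y)
  have hwg_le : luxW lam Φ w g ≤ 2 * luxW lam Φ (fun _ => 1) g := by
    simpa using luxW_le_ofReal_mul_of_le_mul one_le_two hΦconv hΦ0 hΦnn
      (fun _ => zero_le_one) (fun y => by linarith [hw y, (hratio y).2])
  have hf_le := luxW_sectionIntegral_le hΦmono hΦconv hΦc hΦ0 hS hgint hw1 hwS
  constructor
  · calc 1 / 2 * luxW lam Φ w g ≤ 1 / 2 * (2 * luxW lam Φ (fun _ => 1) g) := by gcongr
      _ = luxW lam Φ (fun _ => 1) g := by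
        rw [← mul_assoc, one_div, ENNReal.inv_mul_cancel two_ne_zero ofNat_ne_top, one_mul]
      _ ≤ _ := le_add_self
  · calc _ ≤ lam univ * luxW lam Φ w g + luxW lam Φ w g := add_le_add hf_le hg_le
      _ = _ := by ring

theorem stmt_0 {X : Type*} [MeasurableSpace X] (lam : Measure X)
    (hpos : 0 < lam Set.univ) (hfin : lam Set.univ < ⊤)
    (S : Set (X × X)) (hS : MeasurableSet S)
    (g : X → ℝ) (hgmeas : Measurable g) (hgint : Integrable g lam)
    (f : X → ℝ) (hf : ∀ x, f x = ∫ y in {y | (x, y) ∈ S}, g y ∂lam)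
    (Φ : ℝ → ℝ) (hΦc : Continuous Φ) (hΦmono : MonotoneOn Φ (Set.Ici 0))
    (hΦconv : ConvexOn ℝ (Set.Ici 0) Φ) (hΦ0 : Φ 0 = 0)
    (w : X → ℝ)
    (hw : ∀ y, w y = 1 + (lam {x | (x, y) ∈ S}).toReal / (lam Set.univ).toReal) :
    (1 / 2) * luxW lam Φ w g ≤ luxW lam Φ (fun _ => 1) f + luxW lam Φ (fun _ => 1) g ∧
      luxW lam Φ (fun _ => 1) f + luxW lam Φ (fun _ => 1) g ≤
        (1 + lam Set.univ) * luxW lam Φ w g :=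
  stmt_0_general lam hpos hfin S hS g hgint f hf Φ hΦc hΦmono hΦconv hΦ0 w hw
end

section
/- Let λ be a measure on a measurable space X with 0 < λ(X) < ∞, let S ⊆ X × X be measurable, let g : X → ℝ be measurable and λ-integrable, set f x := ∫_{S_x} g dλ, let w : X → ℝ be measurable with w(x) ≥ 0 for all x, let Φ : ℝ → ℝ be continuous, nondecreasing on [0,∞), convex on [0,∞), with Φ(0) = 0, and let t > 0. Then ∫⁻_X ENNReal.ofReal (w x * Φ (|f x| / t)) dλ(x) ≤ (λ X)⁻¹ * ∫⁻_X ENNReal.ofReal (Φ ((λ X).toReal * |g y| / t)) * (∫⁻_{Sʸ} ENNReal.ofReal (w x) dλ(x)) dλ(y). -/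
open MeasureTheory ENNReal

/-! Since `Φ 0 = 0`, extending `g` by zero off the section `S_x` and applying Jensen's
inequality for the normalised measure `λ / λ(X)` gives
`Φ (|f x| / t) ≤ λ(X)⁻¹ ∫_{S_x} Φ (λ(X) |g| / t) dλ`. Multiplying by `w x`, integrating in `x`
and exchanging the order of integration by Tonelli (`y ∈ S_x ↔ x ∈ Sʸ`) gives the claim. -/

open Set

/-- Jensen's inequality for `F` extended by zero off `s`, which `Φ 0 = 0` allows. -/
theorem ofReal_map_setIntegral_div_measureReal_le {X : Type*} [MeasurableSpace X]
    {μ : Measure X} [IsFiniteMeasure μ] [NeZero μ] {Φ : ℝ → ℝ} {s : Set X}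
    (hΦc : Continuous Φ) (hΦconv : ConvexOn ℝ (Ici 0) Φ)
    (hΦnn : ∀ z, 0 ≤ z → 0 ≤ Φ z) (hΦ0 : Φ 0 = 0) (hs : MeasurableSet s) {F : X → ℝ}
    (hF : ∀ x ∈ s, 0 ≤ F x) (hFint : IntegrableOn F s μ) :
    ENNReal.ofReal (Φ ((∫ x in s, F x ∂μ) / μ.real univ)) ≤
      (μ univ)⁻¹ * ∫⁻ x in s, ENNReal.ofReal (Φ (F x)) ∂μ := by
  by_cases hI : ∫⁻ x in s, ENNReal.ofReal (Φ (F x)) ∂μ = ∞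
  · simp [hI, ENNReal.mul_top, measure_ne_top]
  set G := s.indicator F
  have hG : ∀ x, 0 ≤ G x := indicator_nonneg hF
  have hGint : Integrable G μ := hFint.integrable_indicator hs
  have hΦGnn : ∀ x, 0 ≤ Φ (G x) := fun x => hΦnn _ (hG x)
  have hlint :
      ∫⁻ x, ENNReal.ofReal (Φ (G x)) ∂μ = ∫⁻ x in s, ENNReal.ofReal (Φ (F x)) ∂μ := by
    rw [← lintegral_indicator hs]
    congr 1 with x
    by_cases hx : x ∈ s <;> simp [G, hx, hΦ0]
  have hΦGint : Integrable (fun x => Φ (G x)) μ :=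
    ⟨hΦc.comp_aestronglyMeasurable hGint.aestronglyMeasurable,
      (hasFiniteIntegral_iff_ofReal (.of_forall hΦGnn)).2 (hlint ▸ lt_top_iff_ne_top.2 hI)⟩
  have jensen :=
    hΦconv.map_average_le hΦc.continuousOn isClosed_Ici (.of_forall hG) hGint hΦGint
  rw [average_eq, average_eq, integral_indicator hs, smul_eq_mul, smul_eq_mul,
    integral_eq_lintegral_of_nonneg_ae (.of_forall hΦGnn) hΦGint.aestronglyMeasurable, hlint,
    ← div_eq_inv_mul] at jensen
  have hμ : 0 < μ.real univ := measureReal_univ_pos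
  calc ENNReal.ofReal (Φ ((∫ x in s, F x ∂μ) / μ.real univ))
      ≤ ENNReal.ofReal ((μ.real univ)⁻¹ * (∫⁻ x in s, ENNReal.ofReal (Φ (F x)) ∂μ).toReal) :=
        ENNReal.ofReal_le_ofReal jensen
    _ = _ := by
        rw [ENNReal.ofReal_mul (inv_nonneg.2 hμ.le), ENNReal.ofReal_inv_of_pos hμ,
          measureReal_def, ENNReal.ofReal_toReal (measure_ne_top _ _), ENNReal.ofReal_toReal hI]

theorem ofReal_map_abs_setIntegral_div_le {X : Type*} [MeasurableSpace X] {μ : Measure X}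
    [IsFiniteMeasure μ] [NeZero μ] {Φ : ℝ → ℝ} (hΦc : Continuous Φ)
    (hΦmono : MonotoneOn Φ (Ici 0)) (hΦconv : ConvexOn ℝ (Ici 0) Φ) (hΦ0 : Φ 0 = 0)
    {s : Set X} (hs : MeasurableSet s) {g : X → ℝ} (hg : IntegrableOn g s μ) {t : ℝ}
    (ht : 0 < t) :
    ENNReal.ofReal (Φ (|∫ y in s, g y ∂μ| / t)) ≤
      (μ univ)⁻¹ * ∫⁻ y in s, ENNReal.ofReal (Φ (μ.real univ * |g y| / t)) ∂μ := by
  have hΦnn : ∀ z, 0 ≤ z → 0 ≤ Φ z := fun z hz => hΦ0 ▸ hΦmono self_mem_Ici hz hz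
  have hμ : 0 < μ.real univ := measureReal_univ_pos
  have hscale : (∫ y in s, μ.real univ * |g y| / t ∂μ) / μ.real univ =
      (∫ y in s, |g y| ∂μ) / t := by
    rw [integral_div, integral_const_mul]
    field_simp
  calc ENNReal.ofReal (Φ (|∫ y in s, g y ∂μ| / t))
      ≤ ENNReal.ofReal (Φ ((∫ y in s, |g y| ∂μ) / t)) := by
        refine ENNReal.ofReal_le_ofReal (hΦmono (mem_Ici.2 (by positivity)) ?_ ?_)
        · exact div_nonneg (integral_nonneg fun y => abs_nonneg _) ht.le
        · gcongr
          exact abs_integral_le_integral_abs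
    _ ≤ _ := by
        have := ofReal_map_setIntegral_div_measureReal_le hΦc hΦconv hΦnn hΦ0 hs
          (fun y _ => by positivity) ((hg.abs.const_mul (μ.real univ)).div_const t)
        rwa [hscale] at this

theorem lintegral_mul_setLIntegral_section_comm {X Y : Type*} [MeasurableSpace X]
    [MeasurableSpace Y] {μ : Measure X} {ν : Measure Y} [SFinite μ] [SFinite ν]
    {S : Set (X × Y)} (hS : MeasurableSet S) {a : X → ℝ≥0∞} {b : Y → ℝ≥0∞}
    (ha : Measurable a) (hb : Measurable b) :
    ∫⁻ x, a x * ∫⁻ y in {y | (x, y) ∈ S}, b y ∂ν ∂μ =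
      ∫⁻ y, b y * ∫⁻ x in {x | (x, y) ∈ S}, a x ∂μ ∂ν := by
  set H := S.indicator fun p : X × Y => a p.1 * b p.2
  have hH : Measurable H :=
    ((ha.comp measurable_fst).mul (hb.comp measurable_snd)).indicator hS
  calc ∫⁻ x, a x * ∫⁻ y in {y | (x, y) ∈ S}, b y ∂ν ∂μ
      = ∫⁻ x, ∫⁻ y, H (x, y) ∂ν ∂μ := by
        congr 1 with x
        rw [← lintegral_const_mul _ hb]
        exact (lintegral_indicator (measurable_prodMk_left hS) _).symm
    _ = ∫⁻ y, ∫⁻ x, H (x, y) ∂μ ∂ν := lintegral_lintegral_swap hH.aemeasurable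
    _ = ∫⁻ y, b y * ∫⁻ x in {x | (x, y) ∈ S}, a x ∂μ ∂ν := by
        congr 1 with y
        rw [← lintegral_const_mul _ ha]
        simp_rw [mul_comm (b y)]
        exact lintegral_indicator (measurable_prodMk_right hS) _

theorem stmt_1_general {X : Type*} [MeasurableSpace X] (lam : Measure X)
    (hpos : 0 < lam Set.univ) (hfin : lam Set.univ < ⊤)
    (S : Set (X × X)) (hS : MeasurableSet S)
    (g : X → ℝ) (hgmeas : Measurable g) (hgint : Integrable g lam)
    (f : X → ℝ) (hf : ∀ x, f x = ∫ y in {y | (x, y) ∈ S}, g y ∂lam)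
    (w : X → ℝ) (hwmeas : Measurable w)
    (Φ : ℝ → ℝ) (hΦc : Continuous Φ) (hΦmono : MonotoneOn Φ (Set.Ici 0))
    (hΦconv : ConvexOn ℝ (Set.Ici 0) Φ) (hΦ0 : Φ 0 = 0)
    (t : ℝ) (ht : 0 < t) :
    (∫⁻ x, ENNReal.ofReal (w x * Φ (|f x| / t)) ∂lam) ≤
      (lam Set.univ)⁻¹ *
        ∫⁻ y, ENNReal.ofReal (Φ ((lam Set.univ).toReal * |g y| / t)) *
          (∫⁻ x in {x | (x, y) ∈ S}, ENNReal.ofReal (w x) ∂lam) ∂lam := by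
  have : IsFiniteMeasure lam := ⟨hfin⟩
  have : NeZero lam := ⟨fun h => by simp [h] at hpos⟩
  set φ : X → ℝ≥0∞ := fun y => ENNReal.ofReal (Φ (lam.real univ * |g y| / t))
  have hφ : Measurable φ :=
    (hΦc.measurable.comp ((hgmeas.abs.const_mul _).div_const t)).ennreal_ofReal
  have hΦnn : ∀ z, 0 ≤ z → 0 ≤ Φ z := fun z hz => hΦ0 ▸ hΦmono self_mem_Ici hz hz
  calc ∫⁻ x, ENNReal.ofReal (w x * Φ (|f x| / t)) ∂lam
      ≤ ∫⁻ x, ENNReal.ofReal (w x) *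
          ((lam univ)⁻¹ * ∫⁻ y in {y | (x, y) ∈ S}, φ y ∂lam) ∂lam := by
        refine lintegral_mono fun x => ?_
        rw [ENNReal.ofReal_mul' (hΦnn _ (by positivity)), hf x]
        gcongr
        exact ofReal_map_abs_setIntegral_div_le hΦc hΦmono hΦconv hΦ0
          (measurable_prodMk_left hS) hgint.integrableOn ht
    _ = (lam univ)⁻¹ *
          ∫⁻ x, ENNReal.ofReal (w x) * ∫⁻ y in {y | (x, y) ∈ S}, φ y ∂lam ∂lam := by
        simp_rw [mul_left_comm (ENNReal.ofReal _)]
        exact lintegral_const_mul' _ _ (ENNReal.inv_ne_top.2 hpos.ne')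
    _ = _ := by
        rw [lintegral_mul_setLIntegral_section_comm hS hwmeas.ennreal_ofReal hφ]
        rfl

theorem stmt_1 {X : Type*} [MeasurableSpace X] (lam : Measure X)
    (hpos : 0 < lam Set.univ) (hfin : lam Set.univ < ⊤)
    (S : Set (X × X)) (hS : MeasurableSet S)
    (g : X → ℝ) (hgmeas : Measurable g) (hgint : Integrable g lam)
    (f : X → ℝ) (hf : ∀ x, f x = ∫ y in {y | (x, y) ∈ S}, g y ∂lam)
    (w : X → ℝ) (hwmeas : Measurable w) (hwnn : ∀ x, 0 ≤ w x)
    (Φ : ℝ → ℝ) (hΦc : Continuous Φ) (hΦmono : MonotoneOn Φ (Set.Ici 0))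
    (hΦconv : ConvexOn ℝ (Set.Ici 0) Φ) (hΦ0 : Φ 0 = 0)
    (t : ℝ) (ht : 0 < t) :
    (∫⁻ x, ENNReal.ofReal (w x * Φ (|f x| / t)) ∂lam) ≤
      (lam Set.univ)⁻¹ *
        ∫⁻ y, ENNReal.ofReal (Φ ((lam Set.univ).toReal * |g y| / t)) *
          (∫⁻ x in {x | (x, y) ∈ S}, ENNReal.ofReal (w x) ∂lam) ∂lam :=
  stmt_1_general lam hpos hfin S hS g hgmeas hgint f hf w hwmeas Φ hΦc hΦmono hΦconv hΦ0 t ht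
end

section
/- Let λ be a measure on a measurable space X, let p > 1 be real, let c_p := (p-1)^(p-1) / p^p, let w : X → ℝ be measurable with w(x) > 0 for all x, and let h : X → ℝ be measurable such that the function x ↦ w(x)^(1-p) * |h(x)|^p is λ-integrable. Then the infimum over real k > 0 of (1/k) * (1 + ∫_X w(x) * c_p * (k * |h(x)| / w(x))^p dλ(x)) equals (∫_X w(x)^(1-p) * |h(x)|^p dλ(x))^(1/p), the exponentiations being real powers (rpow) and the infimum being taken in ℝ. -/
/-!
With `A = ∫ w ^ (1 - p) * |h| ^ p`, the constants come out of the integral and the objective at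
`k` becomes `(1 + c * u ^ p) / k` for `u = k * A ^ (1 / p)` and `c = (p - 1) ^ (p - 1) / p ^ p`.
So everything reduces to `u ≤ 1 + c * u ^ p` for `u ≥ 0`, with equality at `u = p / (p - 1)`:
after substituting `u = p / (p - 1) * (1 + s)` this is Bernoulli's inequality
`1 + p * s ≤ (1 + s) ^ p`, since `c * (p / (p - 1)) ^ p = 1 / (p - 1)`.
For `A > 0` the infimum is attained at `k = p / (p - 1) / A ^ (1 / p)`; for `A = 0` it is the
infimum of `1 / k`.
-/

open MeasureTheory Set

lemma sub_one_rpow_div_rpow_mul_div_sub_one_rpow {p : ℝ} (hp : 1 < p) :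
    (p - 1) ^ (p - 1) / p ^ p * (p / (p - 1)) ^ p = 1 / (p - 1) := by
  have hp1 : 0 < p - 1 := by linarith
  rw [Real.div_rpow (by linarith) hp1.le, Real.rpow_sub_one hp1.ne']
  have := Real.rpow_pos_of_pos hp1 p
  have := Real.rpow_pos_of_pos (by linarith : (0:ℝ) < p) p
  field_simp

lemma le_one_add_mul_rpow {p u : ℝ} (hp : 1 < p) (hu : 0 ≤ u) :
    u ≤ 1 + (p - 1) ^ (p - 1) / p ^ p * u ^ p := by
  have hp1 : 0 < p - 1 := by linarith
  set s := u * (p - 1) / p - 1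
  have hs : -1 ≤ s := by
    have : 0 ≤ u * (p - 1) / p := by positivity
    linarith
  have hu_eq : u = p / (p - 1) * (1 + s) := by
    simp only [s]; field_simp; ring
  calc u = 1 + (1 + p * s) / (p - 1) := by rw [hu_eq]; field_simp; ring
    _ ≤ 1 + (1 + s) ^ p / (p - 1) := by
      gcongr; exact one_add_mul_self_le_rpow_one_add hs hp.le
    _ = 1 + (p - 1) ^ (p - 1) / p ^ p * u ^ p := by
      rw [hu_eq, Real.mul_rpow (by positivity) (by linarith), ← mul_assoc,
        sub_one_rpow_div_rpow_mul_div_sub_one_rpow hp]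
      ring

lemma mul_rpow_one_div_rpow {p k A : ℝ} (hp : p ≠ 0) (hk : 0 ≤ k) (hA : 0 ≤ A) :
    (k * A ^ (1 / p)) ^ p = k ^ p * A := by
  rw [Real.mul_rpow hk (by positivity), one_div, Real.rpow_inv_rpow hA hp]

lemma rpow_one_div_le_one_div_mul_one_add {p A k : ℝ} (hp : 1 < p) (hA : 0 ≤ A) (hk : 0 < k) :
    A ^ (1 / p) ≤ 1 / k * (1 + (p - 1) ^ (p - 1) / p ^ p * k ^ p * A) := by
  have hu := le_one_add_mul_rpow hp (mul_nonneg hk.le (Real.rpow_nonneg hA (1 / p)))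
  rw [mul_rpow_one_div_rpow (by linarith) hk.le hA, ← mul_assoc] at hu
  rw [one_div_mul_eq_div, le_div_iff₀ hk, mul_comm]
  exact hu

theorem sInf_one_div_mul_one_add_rpow {p A : ℝ} (hp : 1 < p) (hA : 0 ≤ A) :
    sInf {v : ℝ | ∃ k : ℝ, 0 < k ∧ v = 1 / k * (1 + (p - 1) ^ (p - 1) / p ^ p * k ^ p * A)} =
      A ^ (1 / p) := by
  rcases hA.eq_or_lt with rfl | hA
  · have hset : {v : ℝ | ∃ k : ℝ, 0 < k ∧
        v = 1 / k * (1 + (p - 1) ^ (p - 1) / p ^ p * k ^ p * 0)} = Ioi 0 := by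
      ext v
      simp only [mul_zero, add_zero, mul_one, mem_ofPred_eq, mem_Ioi]
      exact ⟨fun ⟨k, hk, hv⟩ => hv ▸ one_div_pos.mpr hk,
        fun hv => ⟨1 / v, one_div_pos.mpr hv, (one_div_one_div v).symm⟩⟩
    rw [hset, csInf_Ioi, Real.zero_rpow (by positivity)]
  have hp1 : 0 < p - 1 := by linarith
  have ha : 0 < A ^ (1 / p) := Real.rpow_pos_of_pos hA _
  set k₀ := p / (p - 1) / A ^ (1 / p)
  have hk₀ : 0 < k₀ := by positivity
  have hval : (p - 1) ^ (p - 1) / p ^ p * k₀ ^ p * A = 1 / (p - 1) := by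
    rw [mul_assoc, ← mul_rpow_one_div_rpow (by linarith) hk₀.le hA.le,
      div_mul_cancel₀ _ ha.ne', sub_one_rpow_div_rpow_mul_div_sub_one_rpow hp]
  refine IsLeast.csInf_eq ⟨⟨k₀, hk₀, ?_⟩, ?_⟩
  · rw [hval, one_div_div]
    field_simp
    ring
  · rintro v ⟨k, hk, rfl⟩
    exact rpow_one_div_le_one_div_mul_one_add hp hA.le hk

lemma mul_mul_div_rpow {p w k a : ℝ} (hw : 0 < w) (hk : 0 ≤ k) (ha : 0 ≤ a) :
    w * (k * a / w) ^ p = k ^ p * (w ^ (1 - p) * a ^ p) := by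
  rw [Real.div_rpow (by positivity) hw.le, Real.mul_rpow hk ha, Real.rpow_sub hw,
    Real.rpow_one]
  have := Real.rpow_pos_of_pos hw p
  field_simp

lemma integral_mul_const_mul_div_rpow {X : Type*} [MeasurableSpace X] (μ : Measure X)
    {w : X → ℝ} (hw : ∀ x, 0 < w x) (h : X → ℝ) (c p : ℝ) {k : ℝ} (hk : 0 ≤ k) :
    ∫ x, w x * (c * (k * |h x| / w x) ^ p) ∂μ =
      c * k ^ p * ∫ x, w x ^ (1 - p) * |h x| ^ p ∂μ := by
  rw [← integral_const_mul]
  congr 1 with x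
  rw [mul_left_comm, mul_mul_div_rpow (hw x) hk (abs_nonneg _), mul_assoc]

theorem stmt_14_general {X : Type*} [MeasurableSpace X] (lam : Measure X)
    (p : ℝ) (hp : 1 < p)
    (w : X → ℝ) (hwpos : ∀ x, 0 < w x)
    (h : X → ℝ) :
    sInf {v : ℝ | ∃ k : ℝ, 0 < k ∧
      v = (1 / k) *
        (1 + ∫ x, w x * (((p - 1) ^ (p - 1) / p ^ p) * (k * |h x| / w x) ^ p) ∂lam)} =
      (∫ x, w x ^ (1 - p) * |h x| ^ p ∂lam) ^ (1 / p) := by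
  have hA : 0 ≤ ∫ x, w x ^ (1 - p) * |h x| ^ p ∂lam := integral_nonneg fun x =>
    mul_nonneg (Real.rpow_nonneg (hwpos x).le _) (Real.rpow_nonneg (abs_nonneg _) _)
  convert sInf_one_div_mul_one_add_rpow hp hA using 2
  ext v
  refine exists_congr fun k => and_congr_right fun hk => ?_
  rw [integral_mul_const_mul_div_rpow lam hwpos h _ _ hk.le]

theorem stmt_14 {X : Type*} [MeasurableSpace X] (lam : Measure X)
    (p : ℝ) (hp : 1 < p)
    (w : X → ℝ) (hwmeas : Measurable w) (hwpos : ∀ x, 0 < w x)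
    (h : X → ℝ) (hhmeas : Measurable h)
    (hint : Integrable (fun x => w x ^ (1 - p) * |h x| ^ p) lam) :
    sInf {v : ℝ | ∃ k : ℝ, 0 < k ∧
      v = (1 / k) *
        (1 + ∫ x, w x * (((p - 1) ^ (p - 1) / p ^ p) * (k * |h x| / w x) ^ p) ∂lam)} =
      (∫ x, w x ^ (1 - p) * |h x| ^ p ∂lam) ^ (1 / p) :=
  stmt_14_general lam p hp w hwpos h
end
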